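/- Let F = ⟨f_1,…,f_r⟩ be a flip sequence realizing a shortest path T_init = T_0 → T_1 → ⋯ → T_r = T_final, and fix a target triangulation T_final. Suppose e is a diagonal of both T_{i−1} and T_i for some 1 ≤ i ≤ r, e is not a free-diagonal of T_{i−1} with respect to T_final, and e is a free-diagonal of T_i with respect to T_final. Then f_i^→, the diagonal created by the i-th flip, is a neighbor of e in T_i. -/

import Mathlib

open Finset

/-- Two vertices of the convex `m`-gon are adjacent in the cyclic order. -/
def PolyAdj (m : ℕ) (a b : Fin m) : Prop :=
  (a.val + 1) % m = b.val ∨ (b.val + 1) % m = a.val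

/-- `e` is a diagonal of the convex `m`-gon: an unordered pair of distinct,
non-adjacent vertices. -/
def IsDiagonal (m : ℕ) (e : Finset (Fin m)) : Prop :=
  ∃ a b : Fin m, a ≠ b ∧ ¬ PolyAdj m a b ∧ e = {a, b}

/-- The cyclic distance from `a` to `x`, going forwards in the cyclic order. -/
def cycDist (m : ℕ) (a x : Fin m) : ℕ := (x.val + m - a.val) % m

/-- `x` lies strictly between `a` and `b` in the cyclic order. -/
def CycBtw (m : ℕ) (a x b : Fin m) : Prop :=
  0 < cycDist m a x ∧ cycDist m a x < cycDist m a b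

/-- Two chords cross: their endpoints strictly interleave in the cyclic order. -/
def Cross (m : ℕ) (e₁ e₂ : Finset (Fin m)) : Prop :=
  ∃ a b c d : Fin m, e₁ = {a, b} ∧ e₂ = {c, d} ∧ CycBtw m a c b ∧ CycBtw m b d a

/-- A triangulation of the convex `m`-gon: a maximal set of pairwise
non-crossing diagonals. -/
structure Triangulation (m : ℕ) where
  diagonals : Finset (Finset (Fin m))
  isDiagonal : ∀ e ∈ diagonals, IsDiagonal m e
  noncross : ∀ e₁ ∈ diagonals, ∀ e₂ ∈ diagonals, ¬ Cross m e₁ e₂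
  maximal : ∀ e, IsDiagonal m e → (∀ e' ∈ diagonals, ¬ Cross m e e') → e ∈ diagonals

/-- `e` is a side in the triangulation `T`: either an edge of the polygon
(between cyclically adjacent vertices) or a diagonal of `T`. -/
def IsSide (m : ℕ) (T : Triangulation m) (e : Finset (Fin m)) : Prop :=
  (∃ a b : Fin m, PolyAdj m a b ∧ e = {a, b}) ∨ e ∈ T.diagonals

/-- `t` is a triangle of the triangulation `T`: three distinct vertices each
pair of which forms a side of `T`. -/
def IsTriangle (m : ℕ) (T : Triangulation m) (t : Finset (Fin m)) : Prop :=
  ∃ a b c : Fin m, a ≠ b ∧ a ≠ c ∧ b ≠ c ∧ t = {a, b, c} ∧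
    IsSide m T {a, b} ∧ IsSide m T {a, c} ∧ IsSide m T {b, c}

/-- Two diagonals of `T` are neighbors if they both belong to `T` and lie on a
common triangle of `T`; they are independent otherwise. -/
def Neighbor (m : ℕ) (T : Triangulation m) (e₁ e₂ : Finset (Fin m)) : Prop :=
  e₁ ∈ T.diagonals ∧ e₂ ∈ T.diagonals ∧
    ∃ t, IsTriangle m T t ∧ e₁ ⊆ t ∧ e₂ ⊆ t

/-- `T'` is obtained from `T` by flipping the diagonal `e`, which removes `e`
and creates the new diagonal `e'` (necessarily the opposite diagonal of the
quadrilateral formed by the two triangles of `T` containing `e`, since `T'` is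
again a triangulation). -/
def IsFlip (m : ℕ) (T T' : Triangulation m) (e e' : Finset (Fin m)) : Prop :=
  e ∈ T.diagonals ∧ e' ∉ T.diagonals ∧
    T'.diagonals = insert e' (T.diagonals.erase e)

/-- `Ts 0, Ts 1, …, Ts r` is a sequence of triangulations in which `Ts (i+1)`
is obtained from `Ts i` by performing the flip `F i`, which removes the
diagonal `(F i).1` and creates the diagonal `(F i).2`. -/
def IsFlipSeq (m r : ℕ) (F : ℕ → Finset (Fin m) × Finset (Fin m))
    (Ts : ℕ → Triangulation m) : Prop :=
  ∀ i < r, IsFlip m (Ts i) (Ts (i + 1)) (F i).1 (F i).2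

/-- The flip distance between two triangulations: the minimum length of a flip
sequence transforming one into the other. -/
noncomputable def FlipDist (m : ℕ) (T T' : Triangulation m) : ℕ :=
  sInf {r | ∃ F Ts, IsFlipSeq m r F Ts ∧ Ts 0 = T ∧ Ts r = T'}

/-- `e` is a free-diagonal of `T` with respect to `Tfinal`: flipping `e` in `T`
creates a diagonal belonging to `Tfinal`. -/
def FreeDiagonal (m : ℕ) (T Tfinal : Triangulation m) (e : Finset (Fin m)) : Prop :=
  ∃ T' e', IsFlip m T T' e e' ∧ e' ∈ Tfinal.diagonals

/-- Arc of the DAG `D_F` associated to the flip sequence `F` with triangulation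
sequence `Ts`: there is an arc from flip `i` to flip `j` when `i < j` and the
diagonal created by flip `i` is a neighbor of the diagonal removed by flip `j`
in the triangulation `Ts j` in which flip `j` is performed. -/
def Arc (m r : ℕ) (F : ℕ → Finset (Fin m) × Finset (Fin m))
    (Ts : ℕ → Triangulation m) (i j : ℕ) : Prop :=
  i < j ∧ j < r ∧ Neighbor m (Ts j) (F i).2 (F j).1

/-!
Write `e = ab` and let `apb`, `bqa` be the two triangles of `T_{i+1}` on `e`. Any chord crossing
`ab` but no other diagonal of `T_{i+1}` must be `pq`, so flipping `e` in `T_{i+1}` creates `pq`,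
which therefore lies in `T_final`. If the created diagonal `f_i^→` were not a neighbor of `e`, it
would be none of the sides `ap, pb, bq, qa`, so these are already sides in `T_i`: `apb` and `bqa`
are triangles of `T_i` too, and flipping `e` in `T_i` would create `pq` as well, making `e` free
in `T_i`.
-/

theorem Finset.pair_eq_pair_iff {α : Type*} [DecidableEq α] {a b c d : α} :
    ({a, b} : Finset α) = {c, d} ↔ (a = c ∧ b = d) ∨ (a = d ∧ b = c) := by
  refine ⟨fun h => ?_, by rintro (⟨rfl, rfl⟩ | ⟨rfl, rfl⟩) <;> simp [Finset.pair_comm]⟩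
  have ha : a ∈ ({c, d} : Finset α) := h ▸ by simp
  have hb : b ∈ ({c, d} : Finset α) := h ▸ by simp
  have hc : c ∈ ({a, b} : Finset α) := h ▸ by simp
  have hd : d ∈ ({a, b} : Finset α) := h ▸ by simp
  simp only [Finset.mem_insert, Finset.mem_singleton] at ha hb hc hd
  grind

section CyclicOrder

variable {m : ℕ}

lemma cycDist_eq_ite (a x : Fin m) :
    cycDist m a x = if a.val ≤ x.val then x.val - a.val else x.val + m - a.val := by
  have := x.isLt
  unfold cycDist
  split_ifs
  · rw [show x.val + m - a.val = (x.val - a.val) + m by omega, Nat.add_mod_right,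
      Nat.mod_eq_of_lt (by omega)]
  · exact Nat.mod_eq_of_lt (by omega)

lemma cycDist_lt (a x : Fin m) : cycDist m a x < m := by
  have := a.isLt
  rw [cycDist_eq_ite]; split <;> omega

@[simp]
lemma cycDist_self (a : Fin m) : cycDist m a a = 0 := by
  simp [cycDist_eq_ite]

lemma cycDist_eq_zero_iff {a x : Fin m} : cycDist m a x = 0 ↔ x = a := by
  have := x.isLt
  rw [cycDist_eq_ite, Fin.ext_iff]; split <;> omega

lemma cycDist_injective (a : Fin m) : Function.Injective (cycDist m a) := by
  intro x y h
  have := x.isLt; have := y.isLt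
  rw [cycDist_eq_ite, cycDist_eq_ite] at h
  rw [Fin.ext_iff]
  split at h <;> split at h <;> omega

lemma cycDist_rebase (o a x : Fin m) :
    cycDist m a x = if cycDist m o a ≤ cycDist m o x then cycDist m o x - cycDist m o a
      else cycDist m o x + m - cycDist m o a := by
  have := o.isLt; have := a.isLt; have := x.isLt
  rw [cycDist_eq_ite a x, cycDist_eq_ite o a, cycDist_eq_ite o x]
  split_ifs <;> omega

lemma exists_cycDist_eq (a : Fin m) {k : ℕ} (hk : k < m) : ∃ x, cycDist m a x = k := by
  refine ⟨⟨(a.val + k) % m, Nat.mod_lt _ a.pos⟩, ?_⟩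
  have := a.isLt
  rw [cycDist_eq_ite]
  rcases Nat.lt_or_ge (a.val + k) m with h | h
  · simp only [Nat.mod_eq_of_lt h]; split <;> omega
  · simp only [Nat.mod_eq_sub_mod h, Nat.mod_eq_of_lt (show a.val + k - m < m by omega)]
    split <;> omega

lemma polyAdj_iff_cycDist (hm : 2 ≤ m) {a b : Fin m} :
    PolyAdj m a b ↔ cycDist m a b = 1 ∨ cycDist m b a = 1 := by
  have succ_iff (x y : Fin m) : (x.val + 1) % m = y.val ↔ cycDist m x y = 1 := by
    have := x.isLt; have := y.isLt
    rw [cycDist_eq_ite]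
    rcases Nat.lt_or_ge (x.val + 1) m with h | h
    · rw [Nat.mod_eq_of_lt h]; split <;> omega
    · rw [show x.val + 1 = m by omega, Nat.mod_self]; split <;> omega
  rw [PolyAdj, succ_iff, succ_iff]

/-- `a, p, b, q` are pairwise distinct and appear in this order around the polygon. -/
def CycOrder (m : ℕ) (a p b q : Fin m) : Prop :=
  0 < cycDist m a p ∧ cycDist m a p < cycDist m a b ∧ cycDist m a b < cycDist m a q

lemma cycOrder_of_cycDist_lt (o : Fin m) {a p b q : Fin m} (h₁ : cycDist m o a < cycDist m o p)
    (h₂ : cycDist m o p < cycDist m o b) (h₃ : cycDist m o b < cycDist m o q) :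
    CycOrder m a p b q := by
  have := cycDist_lt o q
  have hp := cycDist_rebase o a p
  have hb := cycDist_rebase o a b
  have hq := cycDist_rebase o a q
  unfold CycOrder
  split_ifs at hp hb hq <;> omega

lemma CycOrder.rotate {a p b q : Fin m} (h : CycOrder m a p b q) : CycOrder m p b q a := by
  obtain ⟨h₁, h₂, h₃⟩ := h
  have := cycDist_lt a q
  have hb := cycDist_rebase a p b
  have hq := cycDist_rebase a p q
  have ha := cycDist_rebase a p a
  simp only [cycDist_self] at ha
  unfold CycOrder
  split_ifs at hb hq ha <;> omega

lemma CycOrder.pairwise_ne {a p b q : Fin m} (h : CycOrder m a p b q) :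
    a ≠ p ∧ a ≠ b ∧ a ≠ q ∧ p ≠ b ∧ p ≠ q ∧ b ≠ q := by
  obtain ⟨h₁, h₂, h₃⟩ := h
  refine ⟨?_, ?_, ?_, ?_, ?_, ?_⟩ <;> rintro rfl <;> (try simp only [cycDist_self] at *) <;> omega

lemma CycOrder.isDiagonal {a p b q : Fin m} (h : CycOrder m a p b q) : IsDiagonal m {p, q} := by
  obtain ⟨-, -, -, -, hpq, -⟩ := h.pairwise_ne
  obtain ⟨h₁, h₂, h₃⟩ := h
  have := cycDist_lt a q
  have hq := cycDist_rebase a p q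
  have hp := cycDist_rebase a q p
  refine ⟨p, q, hpq, ?_, rfl⟩
  rw [polyAdj_iff_cycDist (by omega)]
  split_ifs at hq hp <;> omega

lemma cycBtw_iff {a b : Fin m} (hab : a ≠ b) (x : Fin m) :
    CycBtw m b x a ↔ cycDist m a b < cycDist m a x := by
  have hx := cycDist_rebase a b x
  have ha := cycDist_rebase a b a
  have := cycDist_lt a x
  have : cycDist m a b ≠ 0 := fun h => hab (cycDist_eq_zero_iff.mp h).symm
  unfold CycBtw
  simp only [cycDist_self] at ha
  split_ifs at hx ha <;> omega

lemma cross_iff {e₁ e₂ : Finset (Fin m)} :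
    Cross m e₁ e₂ ↔ ∃ a p b q, e₁ = {a, b} ∧ e₂ = {p, q} ∧ CycOrder m a p b q := by
  constructor
  · rintro ⟨a, b, p, q, rfl, rfl, ⟨h₁, h₂⟩, h₃⟩
    have hab : a ≠ b := by rintro rfl; simp at h₂
    exact ⟨a, p, b, q, rfl, rfl, h₁, h₂, (cycBtw_iff hab q).mp h₃⟩
  · rintro ⟨a, p, b, q, rfl, rfl, h⟩
    exact ⟨a, b, p, q, rfl, rfl, ⟨h.1, h.2.1⟩, (cycBtw_iff h.pairwise_ne.2.1 q).mpr h.2.2⟩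

lemma CycOrder.cross {a p b q : Fin m} (h : CycOrder m a p b q) : Cross m {a, b} {p, q} :=
  cross_iff.mpr ⟨a, p, b, q, rfl, rfl, h⟩

lemma cross_of_cycDist_lt (o : Fin m) {a p b q : Fin m} (h₁ : cycDist m o a < cycDist m o p)
    (h₂ : cycDist m o p < cycDist m o b) (h₃ : cycDist m o b < cycDist m o q) :
    Cross m {a, b} {p, q} :=
  (cycOrder_of_cycDist_lt o h₁ h₂ h₃).cross

lemma exists_cycOrder_of_cross {a b : Fin m} {g : Finset (Fin m)} (h : Cross m {a, b} g) :
    ∃ p q, g = {p, q} ∧ CycOrder m a p b q := by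
  obtain ⟨a', p, b', q, hab, rfl, h⟩ := cross_iff.mp h
  rcases Finset.pair_eq_pair_iff.mp hab with ⟨rfl, rfl⟩ | ⟨rfl, rfl⟩
  · exact ⟨p, q, rfl, h⟩
  · exact ⟨q, p, Finset.pair_comm p q, h.rotate.rotate⟩

lemma Cross.symm {e₁ e₂ : Finset (Fin m)} (h : Cross m e₁ e₂) : Cross m e₂ e₁ := by
  obtain ⟨a, p, b, q, rfl, rfl, hord⟩ := cross_iff.mp h
  simpa only [Finset.pair_comm b a] using hord.rotate.cross

lemma not_cross_self (e : Finset (Fin m)) : ¬ Cross m e e := by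
  intro h
  obtain ⟨a, p, b, q, rfl, hpq, h⟩ := cross_iff.mp h
  obtain ⟨hap, -, -, hpb, -, -⟩ := h.pairwise_ne
  have : p ∈ ({a, b} : Finset (Fin m)) := hpq ▸ by simp
  simp only [Finset.mem_insert, Finset.mem_singleton] at this
  rcases this with rfl | rfl <;> simp_all

lemma not_cross_of_polyAdj {a b : Fin m} (h : PolyAdj m a b) (g : Finset (Fin m)) :
    ¬ Cross m {a, b} g := by
  intro hg
  obtain ⟨p, q, rfl, hord⟩ := exists_cycOrder_of_cross hg
  have hab := hord.pairwise_ne.2.1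
  have : 2 ≤ m := by have := a.isLt; have := b.isLt; have := Fin.val_ne_of_ne hab; omega
  rcases (polyAdj_iff_cycDist this).mp h with h | h
  · have := hord.2.1; have := hord.1; omega
  · have := hord.rotate.rotate.2.1; have := hord.rotate.rotate.1; omega

def quadSides (a p b q : Fin m) : Finset (Finset (Fin m)) :=
  {{a, p}, {p, b}, {b, q}, {q, a}}

lemma quadSides_rotate (a p b q : Fin m) : quadSides p b q a = quadSides a p b q := by
  ext s
  simp only [quadSides, Finset.mem_insert, Finset.mem_singleton]
  tauto

lemma CycOrder.ne_of_mem_quadSides {a p b q : Fin m} (h : CycOrder m a p b q)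
    {s : Finset (Fin m)} (hs : s ∈ quadSides a p b q) : s ≠ {a, b} := by
  obtain ⟨hap, hab, haq, hpb, -, hbq⟩ := h.pairwise_ne
  simp only [quadSides, Finset.mem_insert, Finset.mem_singleton] at hs
  rcases hs with rfl | rfl | rfl | rfl <;> rw [Ne, Finset.pair_eq_pair_iff] <;> grind

lemma CycOrder.exists_quadSides_cross {a p b q : Fin m} {g : Finset (Fin m)}
    (h : CycOrder m a p b q) (hg : Cross m {a, b} g) (hne : g ≠ {p, q}) :
    ∃ s ∈ quadSides a p b q, Cross m s g := by
  obtain ⟨u, v, rfl, hu₀, hub, hbv⟩ := exists_cycOrder_of_cross hg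
  obtain ⟨hp₀, hpb, hbq⟩ := h
  have ha : cycDist m a a = 0 := cycDist_self a
  simp only [quadSides, Finset.mem_insert, Finset.mem_singleton, exists_eq_or_imp, exists_eq_left]
  rcases lt_trichotomy (cycDist m a u) (cycDist m a p) with hup | hup | hup
  · exact Or.inl (cross_of_cycDist_lt a (by omega) hup (by omega))
  · obtain rfl := cycDist_injective a hup
    rcases lt_trichotomy (cycDist m a v) (cycDist m a q) with hvq | hvq | hvq
    · exact Or.inr (Or.inr (Or.inl (cross_of_cycDist_lt a hpb hbv hvq).symm))
    · exact absurd (by rw [cycDist_injective a hvq]) hne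
    · refine Or.inr (Or.inr (Or.inr ?_))
      rw [Finset.pair_comm]
      exact cross_of_cycDist_lt a (by omega) (by omega) hvq
  · exact Or.inr (Or.inl (cross_of_cycDist_lt a hup hub hbv))

end CyclicOrder

section Triangulation

variable {m : ℕ} {T T' : Triangulation m}

lemma IsSide.not_cross {s s' : Finset (Fin m)} (hs : IsSide m T s) (hs' : IsSide m T s') :
    ¬ Cross m s s' := by
  rcases hs with ⟨a, b, hadj, rfl⟩ | hs
  · exact not_cross_of_polyAdj hadj s'
  rcases hs' with ⟨a, b, hadj, rfl⟩ | hs'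
  · exact fun h => not_cross_of_polyAdj hadj s h.symm
  · exact T.noncross s hs s' hs'

lemma IsDiagonal.two_le_cycDist {a b : Fin m} (h : IsDiagonal m {a, b}) :
    2 ≤ cycDist m a b := by
  obtain ⟨a', b', hne, hadj, he⟩ := h
  obtain ⟨hab, hadj⟩ : a ≠ b ∧ ¬ PolyAdj m a b := by
    rcases Finset.pair_eq_pair_iff.mp he with ⟨rfl, rfl⟩ | ⟨rfl, rfl⟩
    · exact ⟨hne, hadj⟩
    · exact ⟨hne.symm, fun h => hadj h.symm⟩
  have : 2 ≤ m := by have := a.isLt; have := b.isLt; have := Fin.val_ne_of_ne hab; omega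
  rw [polyAdj_iff_cycDist this] at hadj
  have := cycDist_eq_zero_iff.not.mpr hab.symm
  omega

/-- A diagonal crossing `ap` would have to cross `ab` or `pb`, or be a side `xb` with `x`
before `p`. -/
lemma isSide_of_forall_not_isSide {a b p : Fin m} (hab : IsSide m T {a, b})
    (hpb : IsSide m T {p, b}) (hp₀ : 0 < cycDist m a p) (hp : cycDist m a p < cycDist m a b)
    (hmin : ∀ x, 0 < cycDist m a x → cycDist m a x < cycDist m a p → ¬ IsSide m T {x, b}) :
    IsSide m T {a, p} := by
  by_cases hadj : PolyAdj m a p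
  · exact Or.inl ⟨a, p, hadj, rfl⟩
  have hap : a ≠ p := by rintro rfl; simp at hp₀
  refine Or.inr (T.maximal _ ⟨a, p, hap, hadj, rfl⟩ fun g hg hcr => ?_)
  obtain ⟨u, v, rfl, hu₀, hup, hpv⟩ := exists_cycOrder_of_cross hcr
  rcases lt_trichotomy (cycDist m a v) (cycDist m a b) with hvb | hvb | hvb
  · exact hpb.not_cross (Or.inr hg) (cross_of_cycDist_lt a hup hpv hvb).symm
  · obtain rfl := cycDist_injective a hvb
    exact hmin u hu₀ hup (Or.inr hg)
  · have ha : cycDist m a a = 0 := cycDist_self a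
    exact hab.not_cross (Or.inr hg) (cross_of_cycDist_lt a (by omega) (by omega) hvb)

lemma exists_apex {a b : Fin m} (hab : IsSide m T {a, b}) (h2 : 2 ≤ cycDist m a b) :
    ∃ p, 0 < cycDist m a p ∧ cycDist m a p < cycDist m a b ∧
      IsSide m T {a, p} ∧ IsSide m T {p, b} := by
  classical
  have := cycDist_lt a b
  obtain ⟨x, hx⟩ := exists_cycDist_eq a (k := cycDist m a b - 1) (by omega)
  have hxb : PolyAdj m x b := by
    have := cycDist_rebase a x b
    rw [polyAdj_iff_cycDist (by omega)]
    left
    split_ifs at this <;> omega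
  obtain ⟨p, hp, hmin⟩ := (Finset.univ.filter fun y => 0 < cycDist m a y ∧
      cycDist m a y < cycDist m a b ∧ IsSide m T {y, b}).exists_min_image (cycDist m a)
    ⟨x, by simp only [Finset.mem_filter, Finset.mem_univ, true_and]; exact
      ⟨by omega, by omega, Or.inl ⟨x, b, hxb, rfl⟩⟩⟩
  simp only [Finset.mem_filter, Finset.mem_univ, true_and, and_imp] at hp hmin
  obtain ⟨hp₀, hpb, hside⟩ := hp
  refine ⟨p, hp₀, hpb, isSide_of_forall_not_isSide hab hside hp₀ hpb fun y hy₀ hyp hy => ?_,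
    hside⟩
  have := hmin y hy₀ (by omega) hy
  omega

/-- `apb` and `bqa` are triangles of `T`, lying on either side of the chord `ab`. -/
structure IsFlipQuad (T : Triangulation m) (a p b q : Fin m) : Prop where
  cycOrder : CycOrder m a p b q
  isSide : ∀ s ∈ quadSides a p b q, IsSide m T s

lemma exists_isFlipQuad {a b : Fin m} (hab : {a, b} ∈ T.diagonals) :
    ∃ p q, IsFlipQuad T a p b q := by
  have hba : {b, a} ∈ T.diagonals := Finset.pair_comm a b ▸ hab
  obtain ⟨p, hp₀, hpb, hap, hpb'⟩ := exists_apex (Or.inr hab) (T.isDiagonal _ hab).two_le_cycDist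
  obtain ⟨q, hq₀, hqa, hbq, hqa'⟩ := exists_apex (Or.inr hba) (T.isDiagonal _ hba).two_le_cycDist
  have hq := cycDist_rebase a b q
  have ha := cycDist_rebase a b a
  have := cycDist_lt a q
  simp only [cycDist_self] at ha
  refine ⟨p, q, ⟨hp₀, hpb, by split_ifs at hq ha <;> omega⟩, ?_⟩
  simp only [quadSides, Finset.forall_mem_insert, Finset.mem_singleton, forall_eq]
  exact ⟨hap, hpb', hbq, hqa'⟩

lemma IsFlip.cross {e e' : Finset (Fin m)} (hf : IsFlip m T T' e e') : Cross m e e' := by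
  obtain ⟨he, he', hT'⟩ := hf
  by_contra hnc
  have : e ∈ T'.diagonals := T'.maximal e (T.isDiagonal e he) fun g hg => by
    rw [hT', Finset.mem_insert] at hg
    rcases hg with rfl | hg
    · exact hnc
    · exact T.noncross e he g (Finset.mem_of_mem_erase hg)
  rw [hT', Finset.mem_insert] at this
  rcases this with rfl | h
  · exact he' he
  · simp at h

lemma IsFlip.mem_right {e e' : Finset (Fin m)} (hf : IsFlip m T T' e e') : e' ∈ T'.diagonals :=
  hf.2.2 ▸ Finset.mem_insert_self _ _

lemma IsFlip.not_cross {e e' g : Finset (Fin m)} (hf : IsFlip m T T' e e')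
    (hg : g ∈ T.diagonals.erase e) : ¬ Cross m e' g :=
  T'.noncross e' hf.mem_right g (hf.2.2 ▸ Finset.mem_insert_of_mem hg)

lemma IsSide.of_isFlip {e e' s : Finset (Fin m)} (hs : IsSide m T' s)
    (hf : IsFlip m T T' e e') (hne : s ≠ e') : IsSide m T s := by
  rcases hs with hedge | hs
  · exact Or.inl hedge
  · rw [hf.2.2, Finset.mem_insert] at hs
    exact Or.inr (Finset.mem_of_mem_erase (hs.resolve_left hne))

namespace IsFlipQuad

variable {a p b q : Fin m}

lemma eq_of_cross (hQ : IsFlipQuad T a p b q) {g : Finset (Fin m)} (hg : Cross m {a, b} g)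
    (hnc : ∀ g' ∈ T.diagonals.erase {a, b}, ¬ Cross m g g') : g = {p, q} := by
  by_contra hne
  obtain ⟨s, hs, hcr⟩ := hQ.cycOrder.exists_quadSides_cross hg hne
  rcases hQ.isSide s hs with ⟨x, y, hadj, rfl⟩ | hsT
  · exact not_cross_of_polyAdj hadj g hcr
  · exact hnc s (Finset.mem_erase.mpr ⟨hQ.cycOrder.ne_of_mem_quadSides hs, hsT⟩) hcr.symm

lemma eq_of_isFlip (hQ : IsFlipQuad T a p b q) {g : Finset (Fin m)}
    (hf : IsFlip m T T' {a, b} g) : g = {p, q} :=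
  hQ.eq_of_cross hf.cross fun _ => hf.not_cross

lemma not_cross (hQ : IsFlipQuad T a p b q) {g : Finset (Fin m)}
    (hg : g ∈ T.diagonals.erase {a, b}) : ¬ Cross m {p, q} g := by
  intro hcr
  obtain ⟨s, hs, hs'⟩ := hQ.cycOrder.rotate.exists_quadSides_cross hcr
    (by rw [Finset.pair_comm]; exact Finset.ne_of_mem_erase hg)
  rw [quadSides_rotate] at hs
  exact (hQ.isSide s hs).not_cross (Or.inr (Finset.mem_of_mem_erase hg)) hs'

lemma exists_isFlip (hQ : IsFlipQuad T a p b q) (hab : {a, b} ∈ T.diagonals) :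
    ∃ T', IsFlip m T T' {a, b} {p, q} := by
  have hpq : {p, q} ∉ T.diagonals := fun h => T.noncross _ hab _ h hQ.cycOrder.cross
  refine ⟨⟨insert {p, q} (T.diagonals.erase {a, b}), ?_, ?_, ?_⟩, hab, hpq, rfl⟩
  · simp only [Finset.forall_mem_insert]
    exact ⟨hQ.cycOrder.isDiagonal, fun e he => T.isDiagonal e (Finset.mem_of_mem_erase he)⟩
  · simp only [Finset.forall_mem_insert]
    exact ⟨⟨not_cross_self _, fun g hg => hQ.not_cross hg⟩, fun g hg =>
      ⟨fun h => hQ.not_cross hg h.symm, fun g' hg' =>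
        T.noncross g (Finset.mem_of_mem_erase hg) g' (Finset.mem_of_mem_erase hg')⟩⟩
  · intro f hf hnc
    rw [Finset.mem_insert]
    by_cases hcr : Cross m {a, b} f
    · exact Or.inl (hQ.eq_of_cross hcr fun g hg => hnc g (Finset.mem_insert_of_mem hg))
    refine Or.inr (Finset.mem_erase.mpr ⟨?_, T.maximal f hf fun g hg => ?_⟩)
    · rintro rfl
      exact hnc _ (Finset.mem_insert_self _ _) hQ.cycOrder.cross
    · by_cases hga : g = {a, b}
      · subst hga
        exact fun h => hcr h.symm
      · exact hnc g (Finset.mem_insert_of_mem (Finset.mem_erase.mpr ⟨hga, hg⟩))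

lemma of_isFlip (hQ : IsFlipQuad T' a p b q) {f f' : Finset (Fin m)} (hf : IsFlip m T T' f f')
    (h : f' ∉ quadSides a p b q) : IsFlipQuad T a p b q :=
  ⟨hQ.cycOrder, fun s hs => (hQ.isSide s hs).of_isFlip hf (ne_of_mem_of_not_mem hs h)⟩

lemma neighbor (hQ : IsFlipQuad T a p b q) (hab : {a, b} ∈ T.diagonals) {f : Finset (Fin m)}
    (hf : f ∈ T.diagonals) (hs : f ∈ quadSides a p b q) : Neighbor m T f {a, b} := by
  obtain ⟨hap, hab', haq, hpb, -, hbq⟩ := hQ.cycOrder.pairwise_ne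
  have hside := hQ.isSide
  simp only [quadSides, Finset.forall_mem_insert, Finset.mem_singleton, forall_eq] at hside
  obtain ⟨sap, spb, sbq, sqa⟩ := hside
  have tp : IsTriangle m T {a, b, p} :=
    ⟨a, b, p, hab', hap, hpb.symm, rfl, Or.inr hab, sap, Finset.pair_comm p b ▸ spb⟩
  have tq : IsTriangle m T {a, b, q} :=
    ⟨a, b, q, hab', haq, hbq, rfl, Or.inr hab, Finset.pair_comm q a ▸ sqa, sbq⟩
  refine ⟨hf, hab, ?_⟩
  simp only [quadSides, Finset.mem_insert, Finset.mem_singleton] at hs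
  rcases hs with rfl | rfl | rfl | rfl
  · exact ⟨_, tp, by grind, by grind⟩
  · exact ⟨_, tp, by grind, by grind⟩
  · exact ⟨_, tq, by grind, by grind⟩
  · exact ⟨_, tq, by grind, by grind⟩

end IsFlipQuad

end Triangulation

theorem new_free_diagonal_neighbor_general (m : ℕ)
    (Tfinal : Triangulation m)
    (r : ℕ) (F : ℕ → Finset (Fin m) × Finset (Fin m)) (Ts : ℕ → Triangulation m)
    (hseq : IsFlipSeq m r F Ts)
    (i : ℕ) (hi : i < r) (e : Finset (Fin m))
    (he₁ : e ∈ (Ts i).diagonals) (he₂ : e ∈ (Ts (i + 1)).diagonals)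
    (hnotfree : ¬ FreeDiagonal m (Ts i) Tfinal e)
    (hfree : FreeDiagonal m (Ts (i + 1)) Tfinal e) :
    Neighbor m (Ts (i + 1)) (F i).2 e := by
  have hflip := hseq i hi
  obtain ⟨a, b, -, -, rfl⟩ := (Ts (i + 1)).isDiagonal e he₂
  obtain ⟨p, q, hQ⟩ := exists_isFlipQuad he₂
  obtain ⟨T', e', hflip', he'⟩ := hfree
  rw [hQ.eq_of_isFlip hflip'] at he'
  by_contra hN
  have hQ' : IsFlipQuad (Ts i) a p b q :=
    hQ.of_isFlip hflip fun hs => hN (hQ.neighbor he₂ hflip.mem_right hs)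
  obtain ⟨T'', hflip''⟩ := hQ'.exists_isFlip he₁
  exact hnotfree ⟨T'', _, hflip'', he'⟩

/-- Let `F` be a flip sequence realizing a shortest path
`Tinit = Ts 0 → Ts 1 → ⋯ → Ts r = Tfinal` (here the `i`-th flip, `0`-indexed,
is performed in `Ts i` and yields `Ts (i+1)`). Suppose `e` is a diagonal of
both `Ts i` and `Ts (i+1)`, `e` is not a free-diagonal of `Ts i` with respect
to `Tfinal`, and `e` is a free-diagonal of `Ts (i+1)` with respect to
`Tfinal`. Then `(F i).2`, the diagonal created by this flip, is a neighbor of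
`e` in `Ts (i+1)`. -/
theorem new_free_diagonal_neighbor (m : ℕ) (hm : 3 ≤ m)
    (Tinit Tfinal : Triangulation m)
    (r : ℕ) (F : ℕ → Finset (Fin m) × Finset (Fin m)) (Ts : ℕ → Triangulation m)
    (hseq : IsFlipSeq m r F Ts) (h0 : Ts 0 = Tinit) (hr : Ts r = Tfinal)
    (hmin : r = FlipDist m Tinit Tfinal)
    (i : ℕ) (hi : i < r) (e : Finset (Fin m))
    (he₁ : e ∈ (Ts i).diagonals) (he₂ : e ∈ (Ts (i + 1)).diagonals)
    (hnotfree : ¬ FreeDiagonal m (Ts i) Tfinal e)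
    (hfree : FreeDiagonal m (Ts (i + 1)) Tfinal e) :
    Neighbor m (Ts (i + 1)) (F i).2 e :=
  new_free_diagonal_neighbor_general m Tfinal r F Ts hseq i hi e he₁ he₂ hnotfree hfree
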